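/- arXiv:1808.00372 — 6 statements merged into one kernel-verified Lean document; each statement's English description precedes it below -/
import Mathlib

section
/- (Foster's theorem) Let G be a simple connected graph with n nodes. Then the sum over all edges ij of G of the effective resistance r_{ij} between i and j equals n - 1. -/
open Finset

variable {V : Type*}

/-- Normalized adjacency matrix `P = D^{-1/2} A D^{-1/2}`. -/
noncomputable def normAdj [Fintype V] (G : SimpleGraph V) [DecidableRel G.Adj] :
    Matrix V V ℝ :=
  Matrix.of fun i j =>
    if G.Adj i j then 1 / Real.sqrt ((G.degree i : ℝ) * (G.degree j : ℝ)) else 0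

lemma normAdj_isHermitian [Fintype V] (G : SimpleGraph V) [DecidableRel G.Adj] :
    (normAdj G).IsHermitian := by
  ext i j
  simp only [Matrix.conjTranspose_apply, normAdj, Matrix.of_apply, star_trivial]
  by_cases h : G.Adj i j
  · rw [if_pos h, if_pos ((G.adj_comm i j).mp h), mul_comm]
  · rw [if_neg h, if_neg (fun h' => h ((G.adj_comm j i).mp h'))]

/-- `μ` is an eigenvalue of `M`. -/
def IsEigenvalue {W : Type*} [Fintype W] (M : Matrix W W ℝ) (μ : ℝ) : Prop :=
  ∃ v : W → ℝ, v ≠ 0 ∧ M.mulVec v = μ • v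

/-- Multiplicity of `μ` as an eigenvalue of `M` (dimension of the eigenspace). -/
noncomputable def eigMult {W : Type*} [Fintype W] [DecidableEq W]
    (M : Matrix W W ℝ) (μ : ℝ) : ℕ :=
  Module.finrank ℝ (LinearMap.ker (Matrix.toLin' (M - μ • (1 : Matrix W W ℝ))))

/-- `r` is the effective-resistance function of `G`: `r i j = φ i - φ j` where
`L φ = e_i - e_j`. -/
def IsEffRes [Fintype V] [DecidableEq V] (G : SimpleGraph V) [DecidableRel G.Adj]
    (r : V → V → ℝ) : Prop :=
  ∀ i j : V, ∃ φ : V → ℝ,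
    (G.lapMatrix ℝ).mulVec φ =
      (fun k => (if k = i then (1 : ℝ) else 0) - (if k = j then (1 : ℝ) else 0)) ∧
    r i j = φ i - φ j

/-- `T` is the expected-hitting-time function of the simple random walk on `G`. -/
def IsHitting [Fintype V] (G : SimpleGraph V) [DecidableRel G.Adj] (T : V → V → ℝ) : Prop :=
  (∀ j, T j j = 0) ∧
  ∀ i j : V, i ≠ j → T i j = 1 + (∑ k ∈ G.neighborFinset i, T k j) / (G.degree i : ℝ)

/-- Kemeny constant `∑_{λ eigenvalue ≠ 1} 1/(1-λ)` of the random walk on `G`. -/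
noncomputable def kemeny [Fintype V] [DecidableEq V] (G : SimpleGraph V) [DecidableRel G.Adj]
    (hP : (normAdj G).IsHermitian) : ℝ :=
  ∑ i, if hP.eigenvalues i = 1 then 0 else 1 / (1 - hP.eigenvalues i)

/-- Kirchhoff index. -/
noncomputable def kirchhoff [Fintype V] (r : V → V → ℝ) : ℝ :=
  (∑ i, ∑ j, r i j) / 2

/-- Additive degree-Kirchhoff index. -/
noncomputable def addKirchhoff [Fintype V] (G : SimpleGraph V) [DecidableRel G.Adj]
    (r : V → V → ℝ) : ℝ :=
  (∑ i, ∑ j, ((G.degree i : ℝ) + (G.degree j : ℝ)) * r i j) / 2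

/-- Multiplicative degree-Kirchhoff index. -/
noncomputable def mulKirchhoff [Fintype V] (G : SimpleGraph V) [DecidableRel G.Adj]
    (r : V → V → ℝ) : ℝ :=
  (∑ i, ∑ j, (G.degree i : ℝ) * (G.degree j : ℝ) * r i j) / 2

/-- The adjacency relation of the q-subdivision graph. -/
def qSubAdj (G : SimpleGraph V) (q : ℕ) :
    (V ⊕ (G.edgeSet × Fin q)) → (V ⊕ (G.edgeSet × Fin q)) → Prop
  | Sum.inl u, Sum.inr p => u ∈ (p.1 : Sym2 V)
  | Sum.inr p, Sum.inl u => u ∈ (p.1 : Sym2 V)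
  | _, _ => False

/-- The q-subdivision graph `S_q(G)`: every edge `uv` of `G` is replaced by `q`
disjoint paths of length 2. -/
def qSubdivision (G : SimpleGraph V) (q : ℕ) :
    SimpleGraph (V ⊕ (G.edgeSet × Fin q)) where
  Adj := qSubAdj G q
  symm := by
    constructor
    intro a b h
    cases a <;> cases b <;> simp_all [qSubAdj]
  loopless := by
    constructor
    intro a h
    cases a <;> simp_all [qSubAdj]

noncomputable instance (G : SimpleGraph V) (q : ℕ) :
    DecidableRel (qSubdivision G q).Adj := Classical.decRel _

noncomputable instance [Fintype V] (G : SimpleGraph V) : Fintype G.edgeSet :=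
  Fintype.ofFinite _

/-!
Fix a vertex `v₀` and let `Y` be the matrix whose column `j` is a potential `y` with
`L y = e_j - e_{v₀}`. Since a potential on a connected graph is determined by its Laplacian up to
an additive constant, `r i j = Y i i + Y j j - Y i j - Y j i`. Summed over ordered adjacent pairs
this is `2 tr (L Y)`, and `tr (L Y) = ∑ j, (1 - [j = v₀]) = n - 1`.
-/

open Matrix

namespace SimpleGraph

variable [Fintype V] (G : SimpleGraph V) [DecidableRel G.Adj]

theorem sum_sum_ite_adj_swap {M : Type*} [AddCommMonoid M] (f : V → V → M) :
    ∑ i, ∑ j, (if G.Adj i j then f j i else 0) = ∑ i, ∑ j, (if G.Adj i j then f i j else 0) := by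
  rw [Finset.sum_comm]
  simp_rw [G.adj_comm]

theorem sum_ite_adj_sub_eq_lapMatrix_mul_apply {R : Type*} [CommRing R] [DecidableEq V]
    (X : Matrix V V R) (i : V) :
    ∑ j, (if G.Adj i j then X i i - X j i else 0) = (G.lapMatrix R * X) i i := by
  have hcol : (G.lapMatrix R * X) i i = (G.lapMatrix R *ᵥ fun k => X k i) i := rfl
  rw [hcol, lapMatrix_mulVec_apply, ← sum_filter, ← neighborFinset_eq_filter, sum_sub_distrib,
    sum_const, card_neighborFinset_eq_degree, nsmul_eq_mul]

theorem sum_adj_eq_two_mul_trace_lapMatrix_mul {R : Type*} [CommRing R] [DecidableEq V]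
    (X : Matrix V V R) :
    ∑ i, ∑ j, (if G.Adj i j then X i i + X j j - X i j - X j i else 0) =
      2 * (G.lapMatrix R * X).trace := by
  have hsplit : ∀ i j, (if G.Adj i j then X i i + X j j - X i j - X j i else 0) =
      (if G.Adj i j then X i i - X j i else 0) + (if G.Adj i j then X j j - X i j else 0) := by
    intro i j
    split_ifs <;> ring
  simp_rw [hsplit, sum_add_distrib, sum_sum_ite_adj_swap G (fun i j => X i i - X j i),
    sum_ite_adj_sub_eq_lapMatrix_mul_apply, trace, diag_apply]
  ring

theorem Connected.sub_eq_sub_of_lapMatrix_mulVec_eq [DecidableEq V] (hconn : G.Connected)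
    {φ ψ : V → ℝ} (h : G.lapMatrix ℝ *ᵥ φ = G.lapMatrix ℝ *ᵥ ψ) (i j : V) :
    φ i - φ j = ψ i - ψ j := by
  have hker : G.lapMatrix ℝ *ᵥ (φ - ψ) = 0 := by rw [mulVec_sub, h, sub_self]
  have := lapMatrix_mulVec_eq_zero_iff_forall_reachable G |>.mp hker i j (hconn.preconnected i j)
  simp only [Pi.sub_apply] at this
  linarith

end SimpleGraph

/-- Foster's theorem: the sum of effective resistances over all edges is `n-1`.
(The sum over ordered adjacent pairs is twice the sum over edges.) -/
theorem stmt3 [Fintype V] [DecidableEq V] (G : SimpleGraph V) [DecidableRel G.Adj]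
    (hconn : G.Connected) (r : V → V → ℝ) (hr : IsEffRes G r) :
    ∑ i, ∑ j, (if G.Adj i j then r i j else 0) = 2 * ((Fintype.card V : ℝ) - 1) := by
  obtain ⟨v₀⟩ := hconn.nonempty
  choose y hy _ using fun j => hr j v₀
  set Y : Matrix V V ℝ := Matrix.of fun k j => y j k
  have hr_eq : ∀ i j, r i j = Y i i + Y j j - Y i j - Y j i := by
    intro i j
    obtain ⟨φ, hφ, hrφ⟩ := hr i j
    have hL : G.lapMatrix ℝ *ᵥ (y i - y j) = G.lapMatrix ℝ *ᵥ φ := by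
      ext k
      simp only [mulVec_sub, hy, hφ, Pi.sub_apply]
      ring
    have := hconn.sub_eq_sub_of_lapMatrix_mulVec_eq G hL i j
    simp only [Pi.sub_apply] at this
    simp only [Y, of_apply]
    linarith
  have htrace : (G.lapMatrix ℝ * Y).trace = Fintype.card V - 1 := by
    have hcol : ∀ j, (G.lapMatrix ℝ * Y) j j = (G.lapMatrix ℝ *ᵥ y j) j := fun j => rfl
    simp only [trace, diag_apply, hcol, hy, sum_sub_distrib]
    simp
  simp_rw [hr_eq, ← htrace]
  exact G.sum_adj_eq_two_mul_trace_lapMatrix_mul Y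
end

section
/- Let G be a simple connected graph with n nodes and m edges, and let P be its normalized adjacency matrix with eigenvalues 1 = λ_1 > λ_2 ≥ ... ≥ λ_n. Then the multiplicative degree-Kirchhoff index of G, defined as (1/2)∑_{i,j} d_i d_j r_{ij}, equals 2m ∑_{k=2}^n 1/(1-λ_k). -/
open Finset

variable {V : Type*}

/-! With `s = √d` and `S = diagonal s`, the Laplacian factors as `L = S (1 - P) S`. If
`L φ = e_i - e_j`, then `y = S φ` solves `(1 - P) y = S⁻¹ (e_i - e_j)`, and expanding in an
orthonormal eigenbasis `u_k` of `P` gives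
`r i j = ∑ k, (1 - λ_k)⁻¹ (u_k i / s i - u_k j / s j) ^ 2`. Weighting by `d i * d j` and summing,
the `k`-th term becomes `(1 - λ_k)⁻¹ (2 · 2m - 2 ⟨s, u_k⟩ ^ 2)`, and `⟨s, u_k⟩ = 0` whenever
`λ_k ≠ 1` because `s` is a `1`-eigenvector of the symmetric matrix `P`. -/

open Matrix

section Spectral

variable {ι κ : Type*} [Fintype ι] [Fintype κ]

lemma OrthonormalBasis.sum_dotProduct_mul_dotProduct
    (b : OrthonormalBasis κ ℝ (EuclideanSpace ℝ ι)) (x y : ι → ℝ) :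
    ∑ k, ((b k).ofLp ⬝ᵥ x) * ((b k).ofLp ⬝ᵥ y) = x ⬝ᵥ y := by
  have := b.sum_inner_mul_inner (WithLp.toLp 2 x) (WithLp.toLp 2 y)
  simpa [EuclideanSpace.inner_eq_star_dotProduct, dotProduct_comm] using this

lemma OrthonormalBasis.dotProduct_self (b : OrthonormalBasis κ ℝ (EuclideanSpace ℝ ι)) (k : κ) :
    (b k).ofLp ⬝ᵥ (b k).ofLp = 1 := by
  have := real_inner_self_eq_norm_sq (b k)
  rw [b.orthonormal.1 k, EuclideanSpace.inner_eq_star_dotProduct] at this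
  simpa using this

variable [DecidableEq ι] {A : Matrix ι ι ℝ} (hA : A.IsHermitian)

lemma Matrix.IsHermitian.eigenvectorBasis_dotProduct_mulVec (k : ι) (y : ι → ℝ) :
    (hA.eigenvectorBasis k).ofLp ⬝ᵥ (A *ᵥ y) =
      hA.eigenvalues k * ((hA.eigenvectorBasis k).ofLp ⬝ᵥ y) := by
  rw [dotProduct_mulVec, ← mulVec_transpose, ← conjTranspose_eq_transpose_of_trivial, hA.eq,
    hA.mulVec_eigenvectorBasis, smul_dotProduct]
  rfl

lemma Matrix.IsHermitian.eigenvectorBasis_dotProduct_eq_zero {w : ι → ℝ} {μ : ℝ}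
    (hw : A *ᵥ w = μ • w) {k : ι} (hk : hA.eigenvalues k ≠ μ) :
    (hA.eigenvectorBasis k).ofLp ⬝ᵥ w = 0 := by
  by_contra hc
  have h := hA.eigenvectorBasis_dotProduct_mulVec k w
  rw [hw, dotProduct_smul, smul_eq_mul] at h
  exact hk (mul_right_cancel₀ hc h).symm

end Spectral

lemma sum_sum_sq_mul_sq_mul_div_sub_div_sq {ι : Type*} [Fintype ι] (s v : ι → ℝ)
    (hs : ∀ i, s i ≠ 0) :
    ∑ i, ∑ j, s i ^ 2 * s j ^ 2 * (v i / s i - v j / s j) ^ 2 =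
      2 * (∑ i, s i ^ 2) * (v ⬝ᵥ v) - 2 * (s ⬝ᵥ v) ^ 2 := by
  have expand : ∀ i j, s i ^ 2 * s j ^ 2 * (v i / s i - v j / s j) ^ 2 =
      v i ^ 2 * s j ^ 2 + s i ^ 2 * v j ^ 2 - 2 * (s i * v i * (s j * v j)) := by
    intro i j
    field_simp [hs i, hs j]
    ring
  simp only [expand, sum_add_distrib, sum_sub_distrib, ← mul_sum, ← sum_mul, dotProduct, ← sq]
  ring

/-- Through `0⁻¹ = 0`, `(1 - λ)⁻¹` drops the eigenvalue `λ = 1`, as the paper's sum over `k ≥ 2`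
does. -/
lemma ite_zero_one_div_one_sub_eq_inv {K : Type*} [DivisionRing K] [DecidableEq K] (x : K) :
    (if x = 1 then 0 else 1 / (1 - x)) = (1 - x)⁻¹ := by
  split_ifs with h
  · simp [h]
  · exact one_div _

namespace SimpleGraph

variable [Fintype V] (G : SimpleGraph V) [DecidableRel G.Adj]

noncomputable def sqrtDegree (v : V) : ℝ := √(G.degree v)

lemma sqrtDegree_sq (v : V) : G.sqrtDegree v ^ 2 = G.degree v :=
  Real.sq_sqrt (Nat.cast_nonneg _)

variable {G} in
lemma sqrtDegree_pos {v : V} (hv : 0 < G.degree v) : 0 < G.sqrtDegree v :=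
  Real.sqrt_pos.mpr (mod_cast hv)

variable {G} in
lemma sqrtDegree_pos_of_adj {i j : V} (h : G.Adj i j) : 0 < G.sqrtDegree i :=
  sqrtDegree_pos ((G.degree_pos_iff_exists_adj i).mpr ⟨j, h⟩)

lemma lapMatrix_eq_diagonal_mul_one_sub_normAdj_mul [DecidableEq V] :
    G.lapMatrix ℝ = diagonal G.sqrtDegree * (1 - normAdj G) * diagonal G.sqrtDegree := by
  ext i j
  rw [mul_diagonal, diagonal_mul]
  by_cases hij : i = j
  · subst hij
    simp [lapMatrix, degMatrix, normAdj, ← sq, sqrtDegree_sq]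
  · by_cases hadj : G.Adj i j
    · have hi := (sqrtDegree_pos_of_adj hadj).ne'
      have hj := (sqrtDegree_pos_of_adj hadj.symm).ne'
      simp only [sqrtDegree] at hi hj
      simp [lapMatrix, degMatrix, normAdj, hij, hadj, sqrtDegree]
      field_simp
    · simp [lapMatrix, degMatrix, normAdj, hij, hadj]

lemma lapMatrix_mulVec [DecidableEq V] (φ : V → ℝ) :
    G.lapMatrix ℝ *ᵥ φ = G.sqrtDegree * ((1 - normAdj G) *ᵥ (G.sqrtDegree * φ)) := by
  ext a
  rw [lapMatrix_eq_diagonal_mul_one_sub_normAdj_mul, ← mulVec_mulVec, ← mulVec_mulVec,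
    mulVec_diagonal]
  congr 3
  ext b
  exact mulVec_diagonal _ _ b

lemma normAdj_mulVec_sqrtDegree : normAdj G *ᵥ G.sqrtDegree = G.sqrtDegree := by
  ext i
  have term : ∀ j, normAdj G i j * G.sqrtDegree j =
      if G.Adj i j then (G.sqrtDegree i)⁻¹ else 0 := by
    intro j
    by_cases hadj : G.Adj i j
    · have hj := (sqrtDegree_pos_of_adj hadj.symm).ne'
      simp only [sqrtDegree] at hj
      simp [normAdj, hadj, sqrtDegree]
      field_simp
    · simp [normAdj, hadj]
  simp only [mulVec, dotProduct, term, ← sum_filter, ← neighborFinset_eq_filter, sum_const,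
    card_neighborFinset_eq_degree, nsmul_eq_mul, ← div_eq_mul_inv]
  exact Real.div_sqrt

lemma sqrtDegree_dotProduct_eigenvectorBasis_eq_zero [DecidableEq V] {k : V}
    (hk : (normAdj_isHermitian G).eigenvalues k ≠ 1) :
    G.sqrtDegree ⬝ᵥ ((normAdj_isHermitian G).eigenvectorBasis k).ofLp = 0 := by
  rw [dotProduct_comm]
  exact (normAdj_isHermitian G).eigenvectorBasis_dotProduct_eq_zero
    (by rw [one_smul, normAdj_mulVec_sqrtDegree]) hk

lemma sum_degree_eq_two_mul_card_edgeFinset :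
    ∑ v, (G.degree v : ℝ) = 2 * #G.edgeFinset := by
  exact_mod_cast (by convert G.sum_degrees_eq_twice_card_edges :
    ∑ v, G.degree v = 2 * #G.edgeFinset)

lemma sum_sum_degree_mul_degree_mul_div_sub_div_sq (hd : ∀ v, 0 < G.degree v) (u : V → ℝ) :
    ∑ i, ∑ j, (G.degree i : ℝ) * G.degree j * (u i / G.sqrtDegree i - u j / G.sqrtDegree j) ^ 2 =
      2 * (2 * #G.edgeFinset) * (u ⬝ᵥ u) - 2 * (G.sqrtDegree ⬝ᵥ u) ^ 2 := by
  simp only [← sqrtDegree_sq, ← sum_degree_eq_two_mul_card_edgeFinset]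
  exact sum_sum_sq_mul_sq_mul_div_sub_div_sq _ u fun v => (sqrtDegree_pos (hd v)).ne'

end SimpleGraph

namespace IsEffRes

variable [Fintype V] [DecidableEq V] {G : SimpleGraph V} [DecidableRel G.Adj] {r : V → V → ℝ}

lemma degree_pos (hr : IsEffRes G r) {i j : V} (hij : i ≠ j) : 0 < G.degree i := by
  obtain ⟨φ, hφ, -⟩ := hr i j
  have hi := congrFun hφ i
  rw [SimpleGraph.lapMatrix_mulVec_apply] at hi
  by_contra h
  have h0 : G.degree i = 0 := by omega
  have hN : G.neighborFinset i = ∅ := card_eq_zero.mp (G.card_neighborFinset_eq_degree i ▸ h0)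
  simp [h0, hN, hij] at hi

lemma eq_sum_eigenvectorBasis (hr : IsEffRes G r) (hd : ∀ v, 0 < G.degree v) (i j : V) :
    r i j = ∑ k, (1 - (normAdj_isHermitian G).eigenvalues k)⁻¹ *
      ((normAdj_isHermitian G).eigenvectorBasis k i / G.sqrtDegree i -
        (normAdj_isHermitian G).eigenvectorBasis k j / G.sqrtDegree j) ^ 2 := by
  set hP := normAdj_isHermitian G
  set s := G.sqrtDegree
  have hs : ∀ v, s v ≠ 0 := fun v => (SimpleGraph.sqrtDegree_pos (hd v)).ne'
  obtain ⟨φ, hφ, hrij⟩ := hr i j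
  set e : V → ℝ := fun k => (if k = i then 1 else 0) - (if k = j then 1 else 0)
  set y := s * φ
  set x := e / s
  have hNy : (1 - normAdj G) *ᵥ y = x := by
    ext a
    have := congrFun ((G.lapMatrix_mulVec φ).symm.trans hφ) a
    rw [show x a = e a / s a from rfl, eq_div_iff (hs a), ← this, Pi.mul_apply, mul_comm]
  have hxy : x ⬝ᵥ y = φ i - φ j := by
    have hterm : ∀ a, x a * y a = e a * φ a := fun a => by
      simp only [x, y, Pi.div_apply, Pi.mul_apply]; field_simp [hs a]
    simp [dotProduct, hterm, e, sub_mul, sum_sub_distrib]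
  have hux : ∀ k, (hP.eigenvectorBasis k).ofLp ⬝ᵥ x =
      hP.eigenvectorBasis k i / s i - hP.eigenvectorBasis k j / s j := by
    intro k
    simp only [x, e, dotProduct, Pi.div_apply, sub_div, mul_sub, sum_sub_distrib, ite_div, zero_div,
      mul_ite, mul_zero, mul_one_div, sum_ite_eq', mem_univ, if_true]
  have huy : ∀ k, (hP.eigenvectorBasis k).ofLp ⬝ᵥ x =
      (1 - hP.eigenvalues k) * ((hP.eigenvectorBasis k).ofLp ⬝ᵥ y) := by
    intro k
    rw [← hNy, sub_mulVec, one_mulVec, dotProduct_sub, hP.eigenvectorBasis_dotProduct_mulVec]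
    ring
  rw [hrij, ← hxy, ← hP.eigenvectorBasis.sum_dotProduct_mul_dotProduct]
  refine sum_congr rfl fun k _ => ?_
  rw [← hux, huy, mul_pow, ← mul_assoc, sq, ← mul_assoc, inv_mul_mul_self]
  ring

lemma mulKirchhoff_eq (hr : IsEffRes G r) (hd : ∀ v, 0 < G.degree v) :
    mulKirchhoff G r =
      2 * #G.edgeFinset * ∑ k, (1 - (normAdj_isHermitian G).eigenvalues k)⁻¹ := by
  set hP := normAdj_isHermitian G
  have hk : ∀ k, (1 - hP.eigenvalues k)⁻¹ * ∑ i, ∑ j, (G.degree i : ℝ) * G.degree j *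
      (hP.eigenvectorBasis k i / G.sqrtDegree i - hP.eigenvectorBasis k j / G.sqrtDegree j) ^ 2 =
      2 * (2 * #G.edgeFinset) * (1 - hP.eigenvalues k)⁻¹ := by
    intro k
    rw [G.sum_sum_degree_mul_degree_mul_div_sub_div_sq hd, hP.eigenvectorBasis.dotProduct_self]
    by_cases h : hP.eigenvalues k = 1
    · simp [h]
    · rw [G.sqrtDegree_dotProduct_eigenvectorBasis_eq_zero h]
      ring
  calc mulKirchhoff G r
      = (∑ k, (1 - hP.eigenvalues k)⁻¹ * ∑ i, ∑ j, (G.degree i : ℝ) * G.degree j *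
          (hP.eigenvectorBasis k i / G.sqrtDegree i - hP.eigenvectorBasis k j / G.sqrtDegree j) ^ 2)
          / 2 := by
        simp only [mulKirchhoff, hr.eq_sum_eigenvectorBasis hd, mul_sum]
        congr 1
        refine (sum_congr rfl fun i _ => sum_comm).trans (sum_comm.trans ?_)
        exact sum_congr rfl fun k _ => sum_congr rfl fun i _ => sum_congr rfl fun j _ => by ring
    _ = _ := by
        simp only [hk, ← mul_sum]
        ring

end IsEffRes

theorem stmt5_general [Fintype V] [DecidableEq V] (G : SimpleGraph V) [DecidableRel G.Adj]
    (r : V → V → ℝ) (hr : IsEffRes G r) :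
    mulKirchhoff G r =
      2 * (G.edgeFinset.card : ℝ) *
        ∑ i, if (normAdj_isHermitian G).eigenvalues i = 1 then 0
             else 1 / (1 - (normAdj_isHermitian G).eigenvalues i) := by
  simp only [ite_zero_one_div_one_sub_eq_inv]
  rcases subsingleton_or_nontrivial V with hV | hV
  · have hm : (#G.edgeFinset : ℝ) = 0 := by
      simpa [eq_comm] using G.sum_degree_eq_two_mul_card_edgeFinset
    simp [mulKirchhoff, hm]
  · exact hr.mulKirchhoff_eq fun v =>
      let ⟨w, hw⟩ := exists_ne v
      hr.degree_pos hw.symm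

/-- the multiplicative degree-Kirchhoff index equals `2m ∑_{k=2}^n 1/(1-λ_k)`. -/
theorem stmt5 [Fintype V] [DecidableEq V] (G : SimpleGraph V) [DecidableRel G.Adj]
    (hconn : G.Connected) (r : V → V → ℝ) (hr : IsEffRes G r) :
    mulKirchhoff G r =
      2 * (G.edgeFinset.card : ℝ) *
        ∑ i, if (normAdj_isHermitian G).eigenvalues i = 1 then 0
             else 1 / (1 - (normAdj_isHermitian G).eigenvalues i) :=
  stmt5_general G r hr
end

section
/- Let S_q(G) be the q-subdivision graph of a simple connected graph G (obtained by replacing each edge uv of G with q internally disjoint paths of length 2). If λ̂ is a nonzero eigenvalue of the normalized adjacency matrix P̂ of S_q(G), then 2λ̂² - 1 is an eigenvalue of the normalized adjacency matrix P of G, and the multiplicity of λ̂ for P̂ equals the multiplicity of 2λ̂² - 1 for P. -/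
open Finset

variable {V : Type*}

/-! Listing the original vertices first, `P̂` is the bipartite block matrix `[[0, B], [Bᵀ, 0]]`
with `B u (e, i) = [u ∈ e] / √(2 q d_u)`. For `μ ≠ 0`, restricting to the original vertices is an
isomorphism from the `μ`-eigenspace of such a matrix onto the `μ²`-eigenspace of `B Bᵀ`, with
inverse `x ↦ (x, μ⁻¹ Bᵀ x)`. Counting the `q` subdivision vertices on each edge gives
`B Bᵀ = (I + P) / 2` as soon as every vertex of `G` has positive degree, which holds because `G`
is connected and, `P̂` having a nonzero eigenvalue, has an edge. So `μ`-eigenvectors of `P̂`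
correspond to `(2μ² - 1)`-eigenvectors of `P`. -/

open Matrix

section EigMult

variable {W : Type*} [Fintype W] [DecidableEq W]

lemma mem_ker_toLin'_sub_smul_one_iff (M : Matrix W W ℝ) (μ : ℝ) (g : W → ℝ) :
    g ∈ LinearMap.ker (toLin' (M - μ • 1)) ↔ M *ᵥ g = μ • g := by
  rw [LinearMap.mem_ker, toLin'_apply, sub_mulVec, smul_mulVec, one_mulVec, sub_eq_zero]

lemma isEigenvalue_iff_eigMult_pos (M : Matrix W W ℝ) (μ : ℝ) :
    IsEigenvalue M μ ↔ 0 < eigMult M μ := by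
  rw [eigMult, Nat.pos_iff_ne_zero, Ne, Submodule.finrank_eq_zero, ← Ne, Submodule.ne_bot_iff]
  simp only [mem_ker_toLin'_sub_smul_one_iff]
  exact ⟨fun ⟨v, hv, hMv⟩ => ⟨v, hMv, hv⟩, fun ⟨v, hMv, hv⟩ => ⟨v, hv, hMv⟩⟩

lemma eigMult_smul_sub_smul_one (M : Matrix W W ℝ) {c : ℝ} (hc : c ≠ 0) (d μ : ℝ) :
    eigMult (c • M - d • 1) (c * μ - d) = eigMult M μ := by
  have : c • M - d • 1 - (c * μ - d) • 1 = c • (M - μ • 1) := by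
    rw [sub_smul, mul_smul, smul_sub]; abel
  rw [eigMult, eigMult, this, map_smul, LinearMap.ker_smul _ _ hc]

end EigMult

section BipartiteBlocks

variable {m n : Type*} [Fintype m] [Fintype n]

lemma fromBlocks_zero_mulVec_eq_smul_iff (B : Matrix m n ℝ) (C : Matrix n m ℝ) (μ : ℝ)
    (g : m ⊕ n → ℝ) :
    fromBlocks 0 B C 0 *ᵥ g = μ • g ↔
      B *ᵥ (g ∘ Sum.inr) = μ • (g ∘ Sum.inl) ∧ C *ᵥ (g ∘ Sum.inl) = μ • (g ∘ Sum.inr) := by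
  rw [fromBlocks_mulVec, ← Sum.elim_comp_inl_inr (μ • g), Sum.elim_eq_iff]
  simp only [zero_mulVec, zero_add, add_zero]
  rfl

lemma eigMult_fromBlocks_zero [DecidableEq m] [DecidableEq n] (B : Matrix m n ℝ)
    (C : Matrix n m ℝ) {μ : ℝ} (hμ : μ ≠ 0) :
    eigMult (fromBlocks 0 B C 0) μ = eigMult (B * C) (μ ^ 2) := by
  have restrict_mem : ∀ g ∈ LinearMap.ker (toLin' (fromBlocks 0 B C 0 - μ • 1)),
      LinearMap.funLeft ℝ ℝ Sum.inl g ∈ LinearMap.ker (toLin' (B * C - μ ^ 2 • 1)) := by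
    intro g hg
    obtain ⟨hB, hC⟩ := (fromBlocks_zero_mulVec_eq_smul_iff B C μ g).1
      ((mem_ker_toLin'_sub_smul_one_iff _ _ _).1 hg)
    rw [mem_ker_toLin'_sub_smul_one_iff]
    change (B * C) *ᵥ (g ∘ Sum.inl) = μ ^ 2 • (g ∘ Sum.inl)
    rw [← mulVec_mulVec, hC, mulVec_smul, hB, smul_smul, sq]
  let restrictL := (LinearMap.funLeft ℝ ℝ Sum.inl).restrict restrict_mem
  have injective : Function.Injective restrictL := by
    rw [← LinearMap.ker_eq_bot, Submodule.eq_bot_iff]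
    rintro ⟨g, hg⟩ hzero
    have hinl : g ∘ Sum.inl = 0 := congrArg Subtype.val hzero
    obtain ⟨-, hC⟩ := (fromBlocks_zero_mulVec_eq_smul_iff B C μ g).1
      ((mem_ker_toLin'_sub_smul_one_iff _ _ _).1 hg)
    rw [hinl, mulVec_zero, eq_comm, smul_eq_zero_iff_right hμ] at hC
    ext (i | i)
    exacts [congrFun hinl i, congrFun hC i]
  have surjective : Function.Surjective restrictL := by
    rintro ⟨x, hx⟩
    rw [mem_ker_toLin'_sub_smul_one_iff, ← mulVec_mulVec] at hx
    refine ⟨⟨Sum.elim x (μ⁻¹ • C *ᵥ x), ?_⟩, rfl⟩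
    rw [mem_ker_toLin'_sub_smul_one_iff, fromBlocks_zero_mulVec_eq_smul_iff, Sum.elim_comp_inl,
      Sum.elim_comp_inr, mulVec_smul, hx, smul_smul, smul_smul, sq, inv_mul_cancel_left₀ hμ,
      mul_inv_cancel₀ hμ, one_smul]
    exact ⟨rfl, rfl⟩
  exact (LinearEquiv.ofBijective restrictL ⟨injective, surjective⟩).finrank_eq

end BipartiteBlocks

section Subdivision

variable (G : SimpleGraph V) (q : ℕ)

@[simp] lemma qSubdivision_not_adj_inl_inl (u v : V) :
    ¬(qSubdivision G q).Adj (Sum.inl u) (Sum.inl v) := id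

@[simp] lemma qSubdivision_not_adj_inr_inr (p p' : G.edgeSet × Fin q) :
    ¬(qSubdivision G q).Adj (Sum.inr p) (Sum.inr p') := id

@[simp] lemma qSubdivision_adj_inl_inr (u : V) (p : G.edgeSet × Fin q) :
    (qSubdivision G q).Adj (Sum.inl u) (Sum.inr p) ↔ u ∈ (p.1 : Sym2 V) := Iff.rfl

@[simp] lemma qSubdivision_adj_inr_inl (u : V) (p : G.edgeSet × Fin q) :
    (qSubdivision G q).Adj (Sum.inr p) (Sum.inl u) ↔ u ∈ (p.1 : Sym2 V) := Iff.rfl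

lemma sum_edgeSet_prod_fin [Fintype V] {M : Type*} [AddCommMonoid M] (f : Sym2 V → M)
    (hf : ∀ e ∉ G.edgeSet, f e = 0) :
    ∑ p : G.edgeSet × Fin q, f p.1 = q • ∑ e, f e := by
  classical
  rw [Fintype.sum_prod_type, Finset.sum_congr_set G.edgeSet f (fun e => f e) (fun _ _ => rfl) hf,
    Finset.smul_sum]
  simp only [Finset.sum_const, Finset.card_univ, Fintype.card_fin]
  -- the `Fintype G.edgeSet` instance produced by `sum_congr_set` is not the global one
  convert rfl

variable [DecidableEq V] [DecidableRel G.Adj]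

lemma incMatrix_apply_edge {R : Type*} [Zero R] [One R] (u : V) (e : G.edgeSet) :
    G.incMatrix R u e = if u ∈ (e : Sym2 V) then 1 else 0 := by
  simp [SimpleGraph.incMatrix_apply', SimpleGraph.incidenceSet, e.2]

variable [Fintype V]

lemma qSubdivision_degree_inl (u : V) :
    ((qSubdivision G q).degree (Sum.inl u) : ℝ) = q * G.degree u := by
  rw [SimpleGraph.degree_eq_sum_if_adj, Fintype.sum_sum_type, ← SimpleGraph.sum_incMatrix_apply,
    ← nsmul_eq_mul, ← sum_edgeSet_prod_fin G q _ fun e he =>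
      SimpleGraph.incMatrix_of_notMem_incidenceSet G fun h => he h.1]
  simp only [incMatrix_apply_edge, qSubdivision_not_adj_inl_inl, qSubdivision_adj_inl_inr,
    if_false, Finset.sum_const_zero, zero_add]

lemma qSubdivision_degree_inr (p : G.edgeSet × Fin q) :
    ((qSubdivision G q).degree (Sum.inr p) : ℝ) = 2 := by
  rw [SimpleGraph.degree_eq_sum_if_adj, Fintype.sum_sum_type,
    ← SimpleGraph.sum_incMatrix_apply_of_mem_edgeSet G p.1.2]
  simp only [incMatrix_apply_edge, qSubdivision_not_adj_inr_inr, qSubdivision_adj_inr_inl,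
    if_false, Finset.sum_const_zero, add_zero]

noncomputable def subdivisionIncidence : Matrix V (G.edgeSet × Fin q) ℝ :=
  of fun u p => G.incMatrix ℝ u p.1 / √(2 * q * G.degree u)

lemma normAdj_qSubdivision :
    normAdj (qSubdivision G q) =
      fromBlocks 0 (subdivisionIncidence G q) (subdivisionIncidence G q)ᵀ 0 := by
  ext (u | p) (v | p')
  · simp [normAdj]
  · simp only [normAdj, subdivisionIncidence, of_apply, fromBlocks_apply₁₂, incMatrix_apply_edge,
      qSubdivision_adj_inl_inr, qSubdivision_degree_inl, qSubdivision_degree_inr]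
    split_ifs <;> ring_nf
  · simp only [normAdj, subdivisionIncidence, of_apply, fromBlocks_apply₂₁, transpose_apply,
      incMatrix_apply_edge, qSubdivision_adj_inr_inl, qSubdivision_degree_inl,
      qSubdivision_degree_inr]
    split_ifs <;> ring_nf
  · simp [normAdj]

lemma nonempty_of_isEigenvalue_normAdj_qSubdivision {μ : ℝ} (hμ : μ ≠ 0)
    (h : IsEigenvalue (normAdj (qSubdivision G q)) μ) : Nonempty (G.edgeSet × Fin q) := by
  by_contra hE
  rw [not_nonempty_iff] at hE
  obtain ⟨g, hg, hgμ⟩ := h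
  rw [normAdj_qSubdivision, Subsingleton.elim (subdivisionIncidence G q) 0, transpose_zero,
    fromBlocks_zero, zero_mulVec, eq_comm, smul_eq_zero_iff_right hμ] at hgμ
  exact hg hgμ

lemma subdivisionIncidence_mul_transpose_apply (u w : V) :
    (subdivisionIncidence G q * (subdivisionIncidence G q)ᵀ) u w =
      q * (G.incMatrix ℝ * (G.incMatrix ℝ)ᵀ) u w /
        (√(2 * q * G.degree u) * √(2 * q * G.degree w)) := by
  simp only [mul_apply, transpose_apply, subdivisionIncidence, of_apply, div_mul_div_comm]
  rw [sum_edgeSet_prod_fin G q (fun e => G.incMatrix ℝ u e * G.incMatrix ℝ w e / _) fun e he => by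
      rw [SimpleGraph.incMatrix_of_notMem_incidenceSet G fun h => he h.1, zero_mul, zero_div],
    nsmul_eq_mul, ← Finset.sum_div, mul_div_assoc]

lemma two_smul_subdivisionIncidence_mul_transpose_sub_one (hq : 0 < q)
    (hdeg : ∀ v, 0 < G.degree v) :
    (2 : ℝ) • (subdivisionIncidence G q * (subdivisionIncidence G q)ᵀ) - 1 = normAdj G := by
  have hq' : (0 : ℝ) < q := Nat.cast_pos.2 hq
  have sqrt_split : ∀ v, √(2 * q * G.degree v) = √(2 * q) * √(G.degree v) := fun v =>
    Real.sqrt_mul (by positivity) _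
  have h2q : √(2 * q) * √(2 * q) = 2 * q := Real.mul_self_sqrt (by positivity)
  ext u w
  rw [Matrix.sub_apply, Matrix.smul_apply, subdivisionIncidence_mul_transpose_apply,
    SimpleGraph.incMatrix_mul_transpose, of_apply, normAdj, of_apply, one_apply,
    Real.sqrt_mul (Nat.cast_nonneg _), sqrt_split, sqrt_split, smul_eq_mul, mul_mul_mul_comm, h2q]
  have hdu : (0 : ℝ) < G.degree u := Nat.cast_pos.2 (hdeg u)
  have hdw : (0 : ℝ) < G.degree w := Nat.cast_pos.2 (hdeg w)
  split_ifs with huw hadj hadj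
  · subst huw
    exact absurd hadj G.irrefl
  · subst huw
    rw [Real.mul_self_sqrt hdu.le]
    field_simp
    ring
  · rw [sub_zero]
    field_simp
  · simp

end Subdivision

theorem stmt6_general [Fintype V] [DecidableEq V] (G : SimpleGraph V) [DecidableRel G.Adj]
    (hconn : G.Connected) (q : ℕ) (lam : ℝ) (hlam : lam ≠ 0)
    (h : IsEigenvalue (normAdj (qSubdivision G q)) lam) :
    IsEigenvalue (normAdj G) (2 * lam ^ 2 - 1) ∧
    eigMult (normAdj (qSubdivision G q)) lam = eigMult (normAdj G) (2 * lam ^ 2 - 1) := by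
  obtain ⟨⟨e, he⟩, i⟩ := nonempty_of_isEigenvalue_normAdj_qSubdivision G q hlam h
  have : Nontrivial V :=
    SimpleGraph.nontrivial_iff.1 (nontrivial_of_ne G ⊥ (SimpleGraph.edgeSet_nonempty.1 ⟨e, he⟩))
  have hmult :
      eigMult (normAdj (qSubdivision G q)) lam = eigMult (normAdj G) (2 * lam ^ 2 - 1) := by
    rw [normAdj_qSubdivision, eigMult_fromBlocks_zero _ _ hlam,
      ← two_smul_subdivisionIncidence_mul_transpose_sub_one G q i.pos
        fun v => hconn.preconnected.degree_pos_of_nontrivial v,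
      ← one_smul ℝ (1 : Matrix V V ℝ), eigMult_smul_sub_smul_one _ two_ne_zero]
  rw [isEigenvalue_iff_eigMult_pos] at h ⊢
  exact ⟨hmult ▸ h, hmult⟩

/-- nonzero eigenvalues of `P̂` give eigenvalues `2λ̂²-1` of `P`, with the
same multiplicity. -/
theorem stmt6 [Fintype V] [DecidableEq V] (G : SimpleGraph V) [DecidableRel G.Adj]
    (hconn : G.Connected) (q : ℕ) (hq : 0 < q) (lam : ℝ) (hlam : lam ≠ 0)
    (h : IsEigenvalue (normAdj (qSubdivision G q)) lam) :
    IsEigenvalue (normAdj G) (2 * lam ^ 2 - 1) ∧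
    eigMult (normAdj (qSubdivision G q)) lam = eigMult (normAdj G) (2 * lam ^ 2 - 1) :=
  stmt6_general G hconn q lam hlam h
end

section
/- Let G be a simple connected graph and S_q(G) its q-subdivision graph. For any two old nodes i, j ∈ V(G), the hitting time of the simple random walk on S_q(G) satisfies T̂_{ij} = 4 T_{ij}, where T_{ij} is the hitting time in G. -/
open Finset

variable {V : Type*}

/-! Fix the target `j` and put `A k = T̂_{kj}` for old nodes `k`. A new node on a path
subdividing the edge `kl` has the two neighbours `k` and `l`, so its hitting time is
`1 + (A k + A l) / 2`. Substituting this into the equation at an old node `k` gives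
`A k = 4 + (∑_{l ~ k} A l) / deg k`, i.e. `A / 4` solves the hitting-time equations of `G`.
On a connected graph these have a unique solution (the difference of two solutions is
harmonic off `j` and vanishes at `j`, so it is zero by the maximum principle), hence
`A / 4 = T(·, j)`. -/

theorem SimpleGraph.Preconnected.le_of_subharmonic_off [Fintype V] {G : SimpleGraph V}
    [DecidableRel G.Adj] (hG : G.Preconnected) {j : V} {D : V → ℝ}
    (hD : ∀ i ≠ j, D i * G.degree i ≤ ∑ k ∈ G.neighborFinset i, D k) (i : V) :
    D i ≤ D j := by
  have : Nonempty V := ⟨j⟩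
  obtain ⟨i₀, hi₀⟩ := Finite.exists_max D
  have spread : ∀ a b, G.Adj a b → D a = D i₀ → a ≠ j → D b = D i₀ := by
    intro a b hab ha haj
    by_contra hb
    have hlt : ∑ k ∈ G.neighborFinset a, D k < ∑ _k ∈ G.neighborFinset a, D i₀ :=
      Finset.sum_lt_sum (fun k _ => hi₀ k)
        ⟨b, (G.mem_neighborFinset a b).mpr hab, lt_of_le_of_ne (hi₀ b) hb⟩
    rw [sum_const, G.card_neighborFinset_eq_degree, nsmul_eq_mul, ← ha, mul_comm] at hlt
    exact (hD a haj).not_gt hlt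
  have hj : D j = D i₀ := by
    by_contra hj
    obtain ⟨d, -, hd, hd'⟩ := (hG i₀ j).some.exists_boundary_dart {v | D v = D i₀} rfl hj
    exact hd' (spread _ _ d.adj hd fun h => hj (h ▸ hd))
  exact hj ▸ hi₀ i

theorem SimpleGraph.Preconnected.eq_of_mul_degree_eq [Fintype V] {G : SimpleGraph V}
    [DecidableRel G.Adj] (hG : G.Preconnected) {j : V} {c : ℝ} {X Y : V → ℝ}
    (hXY : X j = Y j)
    (hX : ∀ i ≠ j, X i * G.degree i = c * G.degree i + ∑ k ∈ G.neighborFinset i, X k)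
    (hY : ∀ i ≠ j, Y i * G.degree i = c * G.degree i + ∑ k ∈ G.neighborFinset i, Y k) :
    X = Y := by
  have subharmonic (X Y : V → ℝ)
      (hX : ∀ i ≠ j, X i * G.degree i = c * G.degree i + ∑ k ∈ G.neighborFinset i, X k)
      (hY : ∀ i ≠ j, Y i * G.degree i = c * G.degree i + ∑ k ∈ G.neighborFinset i, Y k)
      (i : V) (hi : i ≠ j) :
      (X - Y) i * G.degree i ≤ ∑ k ∈ G.neighborFinset i, (X - Y) k := by
    simp only [Pi.sub_apply, sum_sub_distrib]
    linarith [hX i hi, hY i hi]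
  funext i
  have h₁ := hG.le_of_subharmonic_off (subharmonic X Y hX hY) i
  have h₂ := hG.le_of_subharmonic_off (subharmonic Y X hY hX) i
  simp only [Pi.sub_apply, hXY, sub_self, sub_nonpos] at h₁ h₂
  exact le_antisymm h₁ h₂

-- Clearing the denominator keeps the equation true at isolated vertices, where `/ 0` is junk.
theorem IsHitting.mul_degree_eq [Fintype V] {G : SimpleGraph V} [DecidableRel G.Adj]
    {T : V → V → ℝ} (hT : IsHitting G T) {i j : V} (hij : i ≠ j) :
    T i j * G.degree i = G.degree i + ∑ k ∈ G.neighborFinset i, T k j := by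
  rw [hT.2 i j hij]
  rcases eq_or_ne (G.degree i) 0 with h | h
  · have hN : G.neighborFinset i = ∅ := card_eq_zero.mp h
    simp [h, hN]
  · field_simp

namespace qSubdivision

variable (G : SimpleGraph V) (q : ℕ)

theorem adj_inl_inl (k u : V) : ¬ (qSubdivision G q).Adj (Sum.inl k) (Sum.inl u) := id

theorem adj_inl_inr (k : V) (p : G.edgeSet × Fin q) :
    (qSubdivision G q).Adj (Sum.inl k) (Sum.inr p) ↔ k ∈ (p.1 : Sym2 V) := Iff.rfl

theorem adj_inr_inr (p p' : G.edgeSet × Fin q) :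
    ¬ (qSubdivision G q).Adj (Sum.inr p) (Sum.inr p') := id

def newVertex (k : V) (p : G.neighborSet k × Fin q) : V ⊕ (G.edgeSet × Fin q) :=
  Sum.inr (⟨s(k, p.1), G.mem_edgeSet.mpr p.1.2⟩, p.2)

theorem newVertex_injective (k : V) : Function.Injective (newVertex G q k) := by
  rintro ⟨⟨l, _⟩, m⟩ ⟨⟨l', _⟩, m'⟩ h
  simp only [newVertex, Sum.inr.injEq, Prod.mk.injEq, Subtype.mk.injEq, Sym2.congr_right] at h
  obtain ⟨rfl, rfl⟩ := h
  rfl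

variable [Fintype V] [DecidableEq V]

theorem neighborFinset_newVertex (k : V) (p : G.neighborSet k × Fin q) :
    (qSubdivision G q).neighborFinset (newVertex G q k p) = {Sum.inl k, Sum.inl p.1.1} := by
  ext (u | p')
  · rw [SimpleGraph.mem_neighborFinset, SimpleGraph.adj_comm, newVertex, adj_inl_inr]
    simp [eq_comm]
  · rw [SimpleGraph.mem_neighborFinset]
    exact iff_of_false (adj_inr_inr G q _ p') (by simp)

theorem degree_newVertex (k : V) (p : G.neighborSet k × Fin q) :
    (qSubdivision G q).degree (newVertex G q k p) = 2 := by
  rw [← SimpleGraph.card_neighborFinset_eq_degree, neighborFinset_newVertex,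
    card_pair (Sum.inl_injective.ne (G.ne_of_adj p.1.2))]

variable [DecidableRel G.Adj]

theorem neighborFinset_inl (k : V) :
    (qSubdivision G q).neighborFinset (Sum.inl k) = univ.image (newVertex G q k) := by
  ext (u | ⟨⟨e, he⟩, m⟩)
  · simpa [newVertex] using adj_inl_inl G q k u
  · rw [SimpleGraph.mem_neighborFinset, adj_inl_inr, mem_image]
    constructor
    · intro hk
      obtain ⟨l, rfl⟩ := Sym2.mem_iff_exists.mp hk
      exact ⟨(⟨l, he⟩, m), mem_univ _, rfl⟩
    · rintro ⟨⟨⟨l, _⟩, m'⟩, -, h⟩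
      simp only [newVertex, Sum.inr.injEq, Prod.mk.injEq, Subtype.mk.injEq] at h
      exact h.1 ▸ Sym2.mem_mk_left k l

theorem sum_neighborFinset_inl (k : V) (f : V ⊕ (G.edgeSet × Fin q) → ℝ) :
    ∑ x ∈ (qSubdivision G q).neighborFinset (Sum.inl k), f x =
      ∑ l : G.neighborSet k, ∑ m : Fin q, f (newVertex G q k (l, m)) := by
  rw [neighborFinset_inl, sum_image fun a _ b _ h => newVertex_injective G q k h,
    ← univ_product_univ, sum_product]

theorem degree_inl (k : V) : (qSubdivision G q).degree (Sum.inl k) = q * G.degree k := by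
  rw [← SimpleGraph.card_neighborFinset_eq_degree, neighborFinset_inl,
    card_image_of_injective _ (newVertex_injective G q k), card_univ, Fintype.card_prod,
    Fintype.card_fin, G.card_neighborSet_eq_degree, mul_comm]

end qSubdivision

open qSubdivision in
theorem IsHitting.qSubdivision_mul_degree [Fintype V] [DecidableEq V] {G : SimpleGraph V}
    [DecidableRel G.Adj] {q : ℕ} (hq : 0 < q)
    {T' : V ⊕ (G.edgeSet × Fin q) → V ⊕ (G.edgeSet × Fin q) → ℝ}
    (hT' : IsHitting (qSubdivision G q) T') {k j : V} (hkj : k ≠ j) :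
    T' (.inl k) (.inl j) * G.degree k =
      4 * G.degree k + ∑ l ∈ G.neighborFinset k, T' (.inl l) (.inl j) := by
  set A : V → ℝ := fun v => T' (.inl v) (.inl j)
  have hnew (p : G.neighborSet k × Fin q) :
      T' (newVertex G q k p) (.inl j) = 1 + (A k + A p.1) / 2 := by
    rw [hT'.2 (newVertex G q k p) _ Sum.inr_ne_inl, neighborFinset_newVertex, degree_newVertex,
      sum_pair (Sum.inl_injective.ne (G.ne_of_adj p.1.2))]
    norm_num [A]
  have hold := hT'.mul_degree_eq (Sum.inl_injective.ne hkj)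
  simp only [degree_inl, sum_neighborFinset_inl, hnew, sum_const, card_univ, Fintype.card_fin,
    nsmul_eq_mul, ← mul_sum, sum_set_coe, ← G.neighborFinset_def, sum_add_distrib,
    ← sum_div, G.card_neighborSet_eq_degree, Nat.cast_mul] at hold
  have hq' : (q : ℝ) ≠ 0 := by positivity
  refine mul_left_cancel₀ hq' ?_
  linear_combination 2 * hold

/-- for old nodes `i, j`, hitting times satisfy `T̂_{ij} = 4 T_{ij}`. -/
theorem stmt10 [Fintype V] [DecidableEq V] (G : SimpleGraph V) [DecidableRel G.Adj]
    (hconn : G.Connected) (q : ℕ) (hq : 0 < q)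
    (T : V → V → ℝ) (T' : (V ⊕ (G.edgeSet × Fin q)) → (V ⊕ (G.edgeSet × Fin q)) → ℝ)
    (hT : IsHitting G T) (hT' : IsHitting (qSubdivision G q) T') (i j : V) :
    T' (Sum.inl i) (Sum.inl j) = 4 * T i j := by
  have hquarter : (fun k => T' (.inl k) (.inl j) / 4) = fun k => T k j := by
    refine hconn.preconnected.eq_of_mul_degree_eq (c := 1) ?_ (fun k hk => ?_)
      (fun k hk => by simpa using hT.mul_degree_eq hk)
    · simp [hT.1, hT'.1]
    · rw [← sum_div]
      linear_combination hT'.qSubdivision_mul_degree hq hk / 4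
  linarith [congrFun hquarter i]
end

section
/- Let G be a simple connected graph and S_q(G) its q-subdivision graph. Then: (1) for old nodes i, j, r̂_{ij} = (2/q) r_{ij}; (2) for a new node i with neighbors s, t and an old node j, r̂_{ij} = 1/2 + (2r_{sj} + 2r_{tj} - r_{st})/(2q); (3) for new nodes i (neighbors s, t) and j (neighbors u, v), r̂_{ij} = 1 + (r_{su} + r_{tu} + r_{sv} + r_{tv} - r_{st} - r_{uv})/(2q), where r and r̂ denote effective resistances in G and S_q(G). -/
/-!
A potential `ψ` on `G` lifts to `S_q(G)` as `2ψ/q` on the old vertices and `(ψ x + ψ y)/q + κ`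
on a new vertex of the edge `xy`. The Laplacian of the lift is `Lψ` minus the incident `κ`-mass at
old vertices and `2κ` at new ones, so for suitable `ψ` (a half-sum of two unit-current potentials
of `G`) and `κ` (charges `±1/2`) it is the unit current between any two vertices of `S_q(G)`.
Hence every resistance of `S_q(G)` is a potential difference in `G`, which the polarization
identity expresses through `r`.
-/

open Finset

variable {V : Type*}

open Matrix

def dipole {W : Type*} [DecidableEq W] (i j : W) : W → ℝ :=
  fun k => (if k = i then 1 else 0) - (if k = j then 1 else 0)

namespace SimpleGraph

variable {W : Type*} [Fintype W] [DecidableEq W] {H : SimpleGraph W} [DecidableRel H.Adj]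

theorem lapMatrix_mulVec_apply_eq_sum_neighborFinset (f : W → ℝ) (i : W) :
    (H.lapMatrix ℝ *ᵥ f) i = ∑ j ∈ H.neighborFinset i, (f i - f j) := by
  rw [Finset.sum_sub_distrib, Finset.sum_const, card_neighborFinset_eq_degree, nsmul_eq_mul,
    lapMatrix_mulVec_apply (R := ℝ)]

theorem lapMatrix_mulVec_apply_eq_sum_ite (f : W → ℝ) (i : W) :
    (H.lapMatrix ℝ *ᵥ f) i = ∑ j, if H.Adj i j then f i - f j else 0 := by
  rw [← Finset.sum_filter, ← neighborFinset_eq_filter,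
    lapMatrix_mulVec_apply_eq_sum_neighborFinset]

theorem lapMatrix_reciprocity {φ χ : W → ℝ} {i j k l : W}
    (hφ : H.lapMatrix ℝ *ᵥ φ = dipole i j) (hχ : H.lapMatrix ℝ *ᵥ χ = dipole k l) :
    φ k - φ l = χ i - χ j := by
  have key : (H.lapMatrix ℝ *ᵥ χ) ⬝ᵥ φ = χ ⬝ᵥ (H.lapMatrix ℝ *ᵥ φ) := by
    rw [dotProduct_mulVec, ← mulVec_transpose, (H.isSymm_lapMatrix (R := ℝ)).eq]
  rw [hφ, hχ] at key
  simpa [dipole, dotProduct, sub_mul, mul_sub, Finset.sum_sub_distrib] using key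

end SimpleGraph

namespace IsEffRes

open SimpleGraph

variable {W : Type*} [Fintype W] [DecidableEq W] {H : SimpleGraph W} [DecidableRel H.Adj]
  {r : W → W → ℝ}

theorem eq_sub_of_lapMatrix_mulVec (hr : IsEffRes H r) {φ : W → ℝ} {i j : W}
    (hφ : H.lapMatrix ℝ *ᵥ φ = dipole i j) : r i j = φ i - φ j := by
  obtain ⟨ρ, hρ, hρr⟩ := hr i j
  rw [hρr]
  exact lapMatrix_reciprocity hρ hφ

theorem self_eq_zero (hr : IsEffRes H r) (i : W) : r i i = 0 := by
  obtain ⟨ρ, -, hρr⟩ := hr i i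
  rw [hρr, sub_self]

/-- The polarization identity for potential differences. -/
theorem sub_eq_of_lapMatrix_mulVec (hr : IsEffRes H r) {φ : W → ℝ} {k l : W}
    (hφ : H.lapMatrix ℝ *ᵥ φ = dipole k l) (i j : W) :
    φ i - φ j = (r i l + r j k - r i k - r j l) / 2 := by
  have key : ∀ x, r x l - r x k = 2 * φ x - φ k - φ l := by
    intro x
    obtain ⟨ψ, hψ, hψr⟩ := hr x l
    have hψφ : H.lapMatrix ℝ *ᵥ (ψ - φ) = dipole x k := by
      rw [mulVec_sub, hψ, hφ]
      ext y
      simp only [dipole, Pi.sub_apply]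
      ring
    have hrecip := lapMatrix_reciprocity hψ hφ
    rw [hψr, hr.eq_sub_of_lapMatrix_mulVec hψφ, Pi.sub_apply, Pi.sub_apply]
    linarith
  linarith [key i, key j]

theorem symm (hr : IsEffRes H r) (i j : W) : r i j = r j i := by
  obtain ⟨φ, hφ, hφr⟩ := hr i j
  have := hr.sub_eq_of_lapMatrix_mulVec hφ j i
  rw [hr.self_eq_zero, hr.self_eq_zero] at this
  linarith

end IsEffRes

namespace SimpleGraph

section Subdivision

variable [Fintype V] [DecidableEq V] (G : SimpleGraph V) (q : ℕ)

theorem sum_edgeSet_ite_mem [DecidableRel G.Adj] (u : V) (g : Sym2 V → ℝ) :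
    (∑ e : G.edgeSet, if u ∈ (e : Sym2 V) then g e else 0)
      = ∑ v ∈ G.neighborFinset u, g s(u, v) := by
  rw [← Finset.sum_filter]
  refine Finset.sum_bij' (fun e he => Sym2.Mem.other' (Finset.mem_filter.mp he).2)
    (fun v hv => ⟨s(u, v), G.mem_edgeSet.mpr ((G.mem_neighborFinset u v).mp hv)⟩)
    ?_ ?_ ?_ ?_ ?_
  · intro e _
    rw [mem_neighborFinset, ← mem_edgeSet, Sym2.other_spec']
    exact e.2
  · intro v _
    simp [Sym2.mem_iff]
  · intro e _
    exact Subtype.ext (Sym2.other_spec' _)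
  · intro v _
    exact Sym2.congr_right.mp (Sym2.other_spec' _)
  · intro e _
    rw [Sym2.other_spec']

omit [Fintype V] [DecidableEq V] in
@[simp]
theorem qSubdivision_not_adj_inl_inl (u v : V) :
    ¬ (qSubdivision G q).Adj (Sum.inl u) (Sum.inl v) := fun h => h

omit [Fintype V] [DecidableEq V] in
@[simp]
theorem qSubdivision_not_adj_inr_inr (p p' : G.edgeSet × Fin q) :
    ¬ (qSubdivision G q).Adj (Sum.inr p) (Sum.inr p') := fun h => h

omit [Fintype V] [DecidableEq V] in
@[simp]
theorem qSubdivision_adj_inl_inr (u : V) (p : G.edgeSet × Fin q) :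
    (qSubdivision G q).Adj (Sum.inl u) (Sum.inr p) ↔ u ∈ (p.1 : Sym2 V) := Iff.rfl

omit [Fintype V] [DecidableEq V] in
@[simp]
theorem qSubdivision_adj_inr_inl (u : V) (p : G.edgeSet × Fin q) :
    (qSubdivision G q).Adj (Sum.inr p) (Sum.inl u) ↔ u ∈ (p.1 : Sym2 V) := Iff.rfl

def endpointSum (ψ : V → ℝ) : Sym2 V → ℝ :=
  Sym2.lift ⟨fun x y => ψ x + ψ y, fun _ _ => add_comm _ _⟩

omit [Fintype V] [DecidableEq V] in
@[simp]
theorem endpointSum_mk (ψ : V → ℝ) (x y : V) : endpointSum ψ s(x, y) = ψ x + ψ y := rfl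

/-- Each edge of `G` becomes `q` parallel paths of resistance `2`, so potentials of `G` lift with
the factor `2 / q`; `κ` accounts for the current injected at the new vertices. -/
noncomputable def subdivLift (ψ : V → ℝ) (κ : G.edgeSet × Fin q → ℝ) :
    V ⊕ (G.edgeSet × Fin q) → ℝ
  | Sum.inl w => 2 / q * ψ w
  | Sum.inr p => endpointSum ψ (p.1 : Sym2 V) / q + κ p

variable {G q}

theorem lapMatrix_mulVec_subdivLift_inl [DecidableRel G.Adj] (hq : q ≠ 0) (ψ : V → ℝ)
    (κ : G.edgeSet × Fin q → ℝ) (u : V) :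
    ((qSubdivision G q).lapMatrix ℝ *ᵥ subdivLift G q ψ κ) (Sum.inl u)
      = (G.lapMatrix ℝ *ᵥ ψ) u
        - ∑ p : G.edgeSet × Fin q with u ∈ (p.1 : Sym2 V), κ p := by
  have hsplit : ∀ p : G.edgeSet × Fin q,
      (if (qSubdivision G q).Adj (Sum.inl u) (Sum.inr p)
        then subdivLift G q ψ κ (Sum.inl u) - subdivLift G q ψ κ (Sum.inr p) else 0)
        = (if u ∈ (p.1 : Sym2 V) then (2 * ψ u - endpointSum ψ p.1) / q else 0)
          - if u ∈ (p.1 : Sym2 V) then κ p else 0 := by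
    intro p
    simp only [qSubdivision_adj_inl_inr, subdivLift]
    split_ifs <;> ring
  rw [lapMatrix_mulVec_apply_eq_sum_ite, Fintype.sum_sum_type]
  simp only [qSubdivision_not_adj_inl_inl, ↓reduceIte, Finset.sum_const_zero, zero_add]
  rw [Finset.sum_congr rfl fun p _ => hsplit p, Finset.sum_sub_distrib, Fintype.sum_prod_type,
    Finset.sum_filter]
  simp only [Finset.sum_const, Finset.card_univ, Fintype.card_fin, nsmul_eq_mul, mul_ite,
    mul_zero, mul_div_cancel₀ _ (Nat.cast_ne_zero.mpr hq : (q : ℝ) ≠ 0)]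
  rw [sum_edgeSet_ite_mem G u fun e => 2 * ψ u - endpointSum ψ e,
    lapMatrix_mulVec_apply_eq_sum_neighborFinset]
  congr 1
  refine Finset.sum_congr rfl fun v _ => ?_
  rw [endpointSum_mk]
  ring

theorem lapMatrix_mulVec_subdivLift_inr (ψ : V → ℝ) (κ : G.edgeSet × Fin q → ℝ)
    (p : G.edgeSet × Fin q) :
    ((qSubdivision G q).lapMatrix ℝ *ᵥ subdivLift G q ψ κ) (Sum.inr p) = 2 * κ p := by
  obtain ⟨⟨e, he⟩, a⟩ := p
  induction e using Sym2.ind with | _ x y => ?_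
  have hxy : x ≠ y := (G.mem_edgeSet.mp he).ne
  rw [lapMatrix_mulVec_apply_eq_sum_ite, Fintype.sum_sum_type]
  simp only [qSubdivision_not_adj_inr_inr, qSubdivision_adj_inr_inl, subdivLift, endpointSum_mk,
    Sym2.mem_iff, ↓reduceIte, Finset.sum_const_zero, add_zero]
  rw [Fintype.sum_eq_add x y hxy fun v hv => if_neg (not_or.mpr hv)]
  simp only [true_or, or_true, ↓reduceIte]
  ring

variable [DecidableRel G.Adj] (hq : q ≠ 0) {ψ : V → ℝ}
include hq

theorem lapMatrix_mulVec_subdivLift_eq_dipole_inl_inl {i j : V}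
    (hψ : G.lapMatrix ℝ *ᵥ ψ = dipole i j) :
    (qSubdivision G q).lapMatrix ℝ *ᵥ subdivLift G q ψ 0 = dipole (Sum.inl i) (Sum.inl j) := by
  ext (w | p)
  · rw [lapMatrix_mulVec_subdivLift_inl hq, hψ]
    simp [dipole]
  · rw [lapMatrix_mulVec_subdivLift_inr]
    simp [dipole]

theorem lapMatrix_mulVec_subdivLift_eq_dipole_inr_inl {s t j : V} (hst : G.Adj s t) (a : Fin q)
    (hψ : G.lapMatrix ℝ *ᵥ ψ = (1 / 2 : ℝ) • (dipole s j + dipole t j)) :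
    (qSubdivision G q).lapMatrix ℝ *ᵥ
        subdivLift G q ψ (Pi.single (⟨s(s, t), G.mem_edgeSet.mpr hst⟩, a) (1 / 2))
      = dipole (Sum.inr (⟨s(s, t), G.mem_edgeSet.mpr hst⟩, a)) (Sum.inl j) := by
  ext (w | p)
  · rw [lapMatrix_mulVec_subdivLift_inl hq, hψ, Finset.sum_pi_single']
    have := hst.ne
    simp only [Pi.smul_apply, Pi.add_apply, smul_eq_mul, dipole, Finset.mem_filter,
      Finset.mem_univ, true_and, Sym2.mem_iff]
    by_cases hs : w = s <;> by_cases ht : w = t <;> by_cases hj : w = j <;>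
      simp_all <;> norm_num
  · rw [lapMatrix_mulVec_subdivLift_inr]
    by_cases hp : p = (⟨s(s, t), G.mem_edgeSet.mpr hst⟩, a)
    · subst hp
      simp [dipole]
    · simp [dipole, hp]

theorem lapMatrix_mulVec_subdivLift_eq_dipole_inr_inr {s t u v : V} (hst : G.Adj s t)
    (huv : G.Adj u v) {a b : Fin q}
    (hmn : ((⟨s(s, t), G.mem_edgeSet.mpr hst⟩, a) : G.edgeSet × Fin q) ≠
      (⟨s(u, v), G.mem_edgeSet.mpr huv⟩, b))
    (hψ : G.lapMatrix ℝ *ᵥ ψ = (1 / 2 : ℝ) • (dipole s u + dipole t v)) :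
    (qSubdivision G q).lapMatrix ℝ *ᵥ
        subdivLift G q ψ (Pi.single (⟨s(s, t), G.mem_edgeSet.mpr hst⟩, a) (1 / 2)
          - Pi.single (⟨s(u, v), G.mem_edgeSet.mpr huv⟩, b) (1 / 2))
      = dipole (Sum.inr (⟨s(s, t), G.mem_edgeSet.mpr hst⟩, a))
          (Sum.inr (⟨s(u, v), G.mem_edgeSet.mpr huv⟩, b)) := by
  ext (w | p)
  · rw [lapMatrix_mulVec_subdivLift_inl hq, hψ]
    have := hst.ne
    have := huv.ne
    simp only [Pi.sub_apply, Finset.sum_sub_distrib, Finset.sum_pi_single', Pi.smul_apply,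
      Pi.add_apply, smul_eq_mul, dipole, Finset.mem_filter, Finset.mem_univ, true_and,
      Sym2.mem_iff]
    by_cases hs : w = s <;> by_cases ht : w = t <;> by_cases hu : w = u <;> by_cases hv : w = v <;>
      simp_all
  · rw [lapMatrix_mulVec_subdivLift_inr]
    by_cases hpm : p = (⟨s(s, t), G.mem_edgeSet.mpr hst⟩, a)
    · subst hpm
      simp [dipole, hmn]
    · by_cases hpn : p = (⟨s(u, v), G.mem_edgeSet.mpr huv⟩, b)
      · subst hpn
        simp [dipole, hpm]
      · simp [dipole, hpm, hpn]

end Subdivision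

end SimpleGraph

namespace IsEffRes

open SimpleGraph

variable [Fintype V] [DecidableEq V] {G : SimpleGraph V} [DecidableRel G.Adj] {q : ℕ}
  {r : V → V → ℝ} {r' : V ⊕ (G.edgeSet × Fin q) → V ⊕ (G.edgeSet × Fin q) → ℝ}

theorem qSubdivision_inl_inl (hr' : IsEffRes (qSubdivision G q) r') (hr : IsEffRes G r)
    (hq : q ≠ 0) (i j : V) :
    r' (Sum.inl i) (Sum.inl j) = 2 / q * r i j := by
  obtain ⟨φ, hφ, hφr⟩ := hr i j
  rw [hr'.eq_sub_of_lapMatrix_mulVec (lapMatrix_mulVec_subdivLift_eq_dipole_inl_inl hq hφ),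
    hφr]
  simp only [subdivLift]
  ring

theorem qSubdivision_inr_inl (hr' : IsEffRes (qSubdivision G q) r') (hr : IsEffRes G r)
    (hq : q ≠ 0) {s t : V} (hst : G.Adj s t) (a : Fin q) (j : V) :
    r' (Sum.inr (⟨s(s, t), G.mem_edgeSet.mpr hst⟩, a)) (Sum.inl j) =
      1 / 2 + (2 * r s j + 2 * r t j - r s t) / (2 * q) := by
  obtain ⟨φ₁, hφ₁ : G.lapMatrix ℝ *ᵥ φ₁ = dipole s j, hr₁⟩ := hr s j
  obtain ⟨φ₂, hφ₂ : G.lapMatrix ℝ *ᵥ φ₂ = dipole t j, hr₂⟩ := hr t j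
  have hψ : G.lapMatrix ℝ *ᵥ ((1 / 2 : ℝ) • (φ₁ + φ₂))
      = (1 / 2 : ℝ) • (dipole s j + dipole t j) := by
    rw [mulVec_smul, mulVec_add, hφ₁, hφ₂]
  have hsum : (φ₁ s - φ₁ j) + (φ₁ t - φ₁ j) + (φ₂ s - φ₂ j) + (φ₂ t - φ₂ j)
      = 2 * r s j + 2 * r t j - r s t := by
    linarith [hr.sub_eq_of_lapMatrix_mulVec hφ₁ t j, hr.sub_eq_of_lapMatrix_mulVec hφ₂ s j,
      hr.symm j s, hr.symm j t, hr.symm t s, hr.self_eq_zero j]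
  rw [hr'.eq_sub_of_lapMatrix_mulVec (lapMatrix_mulVec_subdivLift_eq_dipole_inr_inl hq hst a hψ),
    ← hsum]
  simp only [subdivLift, endpointSum_mk, Pi.smul_apply, Pi.add_apply, smul_eq_mul,
    Pi.single_eq_same]
  ring

theorem qSubdivision_inr_inr (hr' : IsEffRes (qSubdivision G q) r') (hr : IsEffRes G r)
    (hq : q ≠ 0) {s t u v : V} (hst : G.Adj s t) (huv : G.Adj u v) {a b : Fin q}
    (hmn : ((⟨s(s, t), G.mem_edgeSet.mpr hst⟩, a) : G.edgeSet × Fin q) ≠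
      (⟨s(u, v), G.mem_edgeSet.mpr huv⟩, b)) :
    r' (Sum.inr (⟨s(s, t), G.mem_edgeSet.mpr hst⟩, a))
        (Sum.inr (⟨s(u, v), G.mem_edgeSet.mpr huv⟩, b)) =
      1 + (r s u + r t u + r s v + r t v - r s t - r u v) / (2 * q) := by
  obtain ⟨φ₁, hφ₁ : G.lapMatrix ℝ *ᵥ φ₁ = dipole s u, hr₁⟩ := hr s u
  obtain ⟨φ₂, hφ₂ : G.lapMatrix ℝ *ᵥ φ₂ = dipole t v, hr₂⟩ := hr t v
  have hψ : G.lapMatrix ℝ *ᵥ ((1 / 2 : ℝ) • (φ₁ + φ₂))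
      = (1 / 2 : ℝ) • (dipole s u + dipole t v) := by
    rw [mulVec_smul, mulVec_add, hφ₁, hφ₂]
  have hsum : (φ₁ s - φ₁ u) + (φ₁ t - φ₁ v) + (φ₂ s - φ₂ u) + (φ₂ t - φ₂ v)
      = r s u + r t u + r s v + r t v - r s t - r u v := by
    linarith [hr.sub_eq_of_lapMatrix_mulVec hφ₁ t v, hr.sub_eq_of_lapMatrix_mulVec hφ₂ s u,
      hr.symm v s, hr.symm t s, hr.symm v u, hr.symm u t]
  rw [hr'.eq_sub_of_lapMatrix_mulVec
    (lapMatrix_mulVec_subdivLift_eq_dipole_inr_inr hq hst huv hmn hψ), ← hsum]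
  simp only [subdivLift, endpointSum_mk, Pi.smul_apply, Pi.add_apply, Pi.sub_apply,
    smul_eq_mul, Pi.single_eq_same, Pi.single_eq_of_ne hmn, Pi.single_eq_of_ne hmn.symm]
  ring

end IsEffRes

theorem stmt13_general [Fintype V] [DecidableEq V] (G : SimpleGraph V) [DecidableRel G.Adj]
    (q : ℕ) (hq : 0 < q)
    (r : V → V → ℝ) (r' : (V ⊕ (G.edgeSet × Fin q)) → (V ⊕ (G.edgeSet × Fin q)) → ℝ)
    (hr : IsEffRes G r) (hr' : IsEffRes (qSubdivision G q) r') :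
    (∀ i j : V, r' (Sum.inl i) (Sum.inl j) = 2 / q * r i j) ∧
    (∀ (s t : V) (hst : G.Adj s t) (a : Fin q) (j : V),
      r' (Sum.inr (⟨s(s, t), G.mem_edgeSet.mpr hst⟩, a)) (Sum.inl j) =
        1 / 2 + (2 * r s j + 2 * r t j - r s t) / (2 * q)) ∧
    (∀ (s t u v : V) (hst : G.Adj s t) (huv : G.Adj u v) (a b : Fin q),
      ((⟨s(s, t), G.mem_edgeSet.mpr hst⟩, a) : G.edgeSet × Fin q) ≠
        (⟨s(u, v), G.mem_edgeSet.mpr huv⟩, b) →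
      r' (Sum.inr (⟨s(s, t), G.mem_edgeSet.mpr hst⟩, a))
          (Sum.inr (⟨s(u, v), G.mem_edgeSet.mpr huv⟩, b)) =
        1 + (r s u + r t u + r s v + r t v - r s t - r u v) / (2 * q)) :=
  ⟨hr'.qSubdivision_inl_inl hr hq.ne',
    fun _ _ hst a j => hr'.qSubdivision_inr_inl hr hq.ne' hst a j,
    fun _ _ _ _ hst huv _ _ hmn => hr'.qSubdivision_inr_inr hr hq.ne' hst huv hmn⟩

/-- effective resistances in `S_q(G)` in terms of those in `G`. -/
theorem stmt13 [Fintype V] [DecidableEq V] (G : SimpleGraph V) [DecidableRel G.Adj]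
    (hconn : G.Connected) (q : ℕ) (hq : 0 < q)
    (r : V → V → ℝ) (r' : (V ⊕ (G.edgeSet × Fin q)) → (V ⊕ (G.edgeSet × Fin q)) → ℝ)
    (hr : IsEffRes G r) (hr' : IsEffRes (qSubdivision G q) r') :
    (∀ i j : V, r' (Sum.inl i) (Sum.inl j) = 2 / q * r i j) ∧
    (∀ (s t : V) (hst : G.Adj s t) (a : Fin q) (j : V),
      r' (Sum.inr (⟨s(s, t), G.mem_edgeSet.mpr hst⟩, a)) (Sum.inl j) =
        1 / 2 + (2 * r s j + 2 * r t j - r s t) / (2 * q)) ∧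
    (∀ (s t u v : V) (hst : G.Adj s t) (huv : G.Adj u v) (a b : Fin q),
      ((⟨s(s, t), G.mem_edgeSet.mpr hst⟩, a) : G.edgeSet × Fin q) ≠
        (⟨s(u, v), G.mem_edgeSet.mpr huv⟩, b) →
      r' (Sum.inr (⟨s(s, t), G.mem_edgeSet.mpr hst⟩, a))
          (Sum.inr (⟨s(u, v), G.mem_edgeSet.mpr huv⟩, b)) =
        1 + (r s u + r t u + r s v + r t v - r s t - r u v) / (2 * q)) :=
  stmt13_general G q hq r r' hr hr'
end

section
/- Let G be a simple connected graph with n nodes and m edges, S_q(G) its q-subdivision graph with new node set V′. Then ∑_{{i,j}⊆V′} r̂_{ij} = (q/2) K̃(G) + mq(mq-1)/2 - m(n-1)q/2, where K̃(G) = ∑_{{i,j}} d_i d_j r_{ij} is the multiplicative degree-Kirchhoff index of G. -/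
open Finset

variable {V : Type*}

/-!
Let `χ` be the potential of a unit current from the new vertex `p` (on the edge `e`) to `p'`
(on `e'`) in `S_q(G)`. Each new vertex has degree two, so there `χ` is the mean of its two
endpoints, shifted by `±1/2` at `p` and `p'`. Feeding this into Kirchhoff's law at the old
vertices shows that `q • χ|_V` is a potential in `G` for the demand `1_e - 1_e'`, and then
`r̂(p, p') = 1 - Q(1_e - 1_e') / (4q)`, where `Q(c) = ∑ c_i c_j r_ij` is the quadratic form of the
resistance matrix (for a demand `c` of total zero with potential `φ`, `c ⬝ φ = -Q(c)/2`).
With `x_p = 1_{e_p}`, summing over all `N = mq` ordered pairs gives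
`∑ Q(x_p - x_p') = 2N ∑ Q(x_p) - 2 Q(∑ x_p)`. Here `∑_p x_p = q • deg`, which produces the
multiplicative degree-Kirchhoff index, and `∑_e Q(1_e) = ∑_{u ∼ v} r_uv = 2(n - 1)` by Foster's
theorem.
-/

open Matrix SimpleGraph

theorem LinearMap.BilinForm.sum_sum_apply_sub_sub {R M ι : Type*} [CommRing R] [AddCommGroup M]
    [Module R M] [Fintype ι] (B : LinearMap.BilinForm R M) (x : ι → M) :
    ∑ i, ∑ j, B (x i - x j) (x i - x j) =
      2 * Fintype.card ι * ∑ i, B (x i) (x i) - 2 * B (∑ i, x i) (∑ i, x i) := by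
  simp only [map_sub, LinearMap.sub_apply, map_sum, LinearMap.sum_apply, sum_sub_distrib,
    sum_const, card_univ, nsmul_eq_mul]
  rw [sum_comm (f := fun i j => B (x j) (x i)), ← mul_sum]
  ring

theorem Fintype.sum_sum_ite_eq_zero_one {R ι : Type*} [Ring R] [Fintype ι] [DecidableEq ι] :
    ∑ i : ι, ∑ j : ι, (if i = j then (0 : R) else 1) =
      Fintype.card ι * (Fintype.card ι - 1) := by
  have h (i j : ι) : (if i = j then (0 : R) else 1) = 1 - if i = j then 1 else 0 := by
    split_ifs <;> simp
  simp [h, sum_sub_distrib, mul_sub]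

theorem Fintype.sum_prod_fin_fst {α M : Type*} [Fintype α] [AddCommMonoid M] (q : ℕ)
    (f : α → M) : ∑ w : α × Fin q, f w.1 = q • ∑ a, f a := by
  simp [Fintype.sum_prod_type, smul_sum]

section

variable {G : SimpleGraph V} [DecidableRel G.Adj]

theorem SimpleGraph.incMatrix_apply_edgeSet [DecidableEq V] (u : V) (e : G.edgeSet) :
    G.incMatrix ℝ u e = if u ∈ (e : Sym2 V) then 1 else 0 := by
  simp [incMatrix_apply', incidenceSet, e.2]

variable [Fintype V]

theorem SimpleGraph.sum_sum_neighborFinset_comm {M : Type*} [AddCommMonoid M] (f : V → V → M) :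
    ∑ u, ∑ v ∈ G.neighborFinset u, f u v = ∑ u, ∑ v ∈ G.neighborFinset u, f v u := by
  simp only [neighborFinset_eq_filter, sum_filter]
  rw [sum_comm]
  simp only [G.adj_comm]

theorem mulKirchhoff_eq_dotProduct (r : V → V → ℝ) :
    mulKirchhoff G r =
      ((fun u => (G.degree u : ℝ)) ⬝ᵥ of r *ᵥ fun u => (G.degree u : ℝ)) / 2 := by
  simp only [mulKirchhoff, dotProduct, mulVec, of_apply, mul_sum]
  congr 1
  exact sum_congr rfl fun _ _ => sum_congr rfl fun _ _ => by ring

variable [DecidableEq V]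

theorem SimpleGraph.lapMatrix_mulVec_apply_eq_sum (φ : V → ℝ) (i : V) :
    (G.lapMatrix ℝ *ᵥ φ) i = ∑ j, if G.Adj i j then φ i - φ j else 0 := by
  rw [lapMatrix_mulVec_apply, degree_eq_sum_if_adj, neighborFinset_eq_filter, sum_filter,
    sum_mul, ← sum_sub_distrib]
  exact sum_congr rfl fun j _ => by split_ifs <;> ring

theorem SimpleGraph.Connected.sub_eq_sub_of_lapMatrix_mulVec_eq_s15 (hG : G.Connected)
    {φ ψ : V → ℝ} (h : G.lapMatrix ℝ *ᵥ φ = G.lapMatrix ℝ *ᵥ ψ) (i j : V) :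
    φ i - φ j = ψ i - ψ j := by
  have := (lapMatrix_mulVec_eq_zero_iff_forall_reachable G (x := φ - ψ)).1
    (by rw [mulVec_sub, h, sub_self]) i j (hG.preconnected i j)
  simp only [Pi.sub_apply] at this
  linarith

theorem SimpleGraph.sum_incMatrix_mul_eq_sum_edgeSet {R : Type*} [Semiring R] (u : V)
    (f : Sym2 V → R) : ∑ e, G.incMatrix R u e * f e = ∑ e : G.edgeSet, G.incMatrix R u e * f e := by
  rw [← sum_subset (subset_univ G.edgeFinset), ← sum_coe_sort]
  · exact Fintype.sum_equiv (Equiv.subtypeEquivRight (by simp)) _ _ fun _ => rfl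
  · intro e _ he
    rw [incMatrix_of_notMem_incidenceSet _ fun h => he (by simpa using h.1), zero_mul]

theorem SimpleGraph.sum_incMatrix_mul_incMatrix (u v : V) :
    ∑ e, G.incMatrix ℝ u e * G.incMatrix ℝ v e =
      (if u = v then (G.degree u : ℝ) else 0) + if G.Adj u v then 1 else 0 := by
  have := congrFun (congrFun (incMatrix_mul_transpose (R := ℝ) G) u) v
  simp only [mul_apply, transpose_apply, of_apply] at this
  rw [this]
  split_ifs with h h' <;> simp_all

theorem SimpleGraph.lapMatrix_mulVec_apply_eq_sum_incMatrix (φ : V → ℝ) (u : V) :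
    (G.lapMatrix ℝ *ᵥ φ) u =
      ∑ e, G.incMatrix ℝ u e * (2 * φ u - ∑ v, G.incMatrix ℝ v e * φ v) := by
  simp only [mul_sub, mul_sum, sum_sub_distrib, ← mul_assoc, mul_comm _ (2 : ℝ)]
  rw [sum_comm]
  simp only [← sum_mul, ← mul_sum, sum_incMatrix_mul_incMatrix, add_mul, ite_mul, zero_mul,
    one_mul, sum_add_distrib, sum_ite_eq, mem_univ, if_true, sum_incMatrix_apply,
    lapMatrix_mulVec_apply, neighborFinset_eq_filter, sum_filter]
  ring

theorem SimpleGraph.sum_edgeSet_incMatrix_transpose :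
    ∑ e : G.edgeSet, (G.incMatrix ℝ)ᵀ e = fun u => (G.degree u : ℝ) := by
  ext u
  simpa [← sum_incMatrix_apply (R := ℝ)] using
    (sum_incMatrix_mul_eq_sum_edgeSet (G := G) u fun _ => (1 : ℝ)).symm

variable {r : V → V → ℝ}

theorem IsEffRes.apply_self (hr : IsEffRes G r) (i : V) : r i i = 0 := by
  obtain ⟨φ, -, h⟩ := hr i i
  rw [h, sub_self]

theorem IsEffRes.exists_grounded (hr : IsEffRes G r) (o : V) :
    ∃ g : V → V → ℝ, ∀ i, G.lapMatrix ℝ *ᵥ g i =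
      fun k => (if k = i then 1 else 0) - if k = o then 1 else 0 :=
  ⟨fun i => (hr i o).choose, fun i => (hr i o).choose_spec.1⟩

theorem IsEffRes.eq_of_grounded (hG : G.Connected) (hr : IsEffRes G r) {o : V}
    {g : V → V → ℝ}
    (hg : ∀ i, G.lapMatrix ℝ *ᵥ g i = fun k => (if k = i then 1 else 0) - if k = o then 1 else 0)
    (i j : V) : r i j = g i i - g i j - g j i + g j j := by
  obtain ⟨φ, hφ, hr⟩ := hr i j
  have := hG.sub_eq_sub_of_lapMatrix_mulVec_eq_s15 (ψ := g i - g j)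
    (by rw [hφ, mulVec_sub, hg, hg]; ext k; simp) i j
  simp only [Pi.sub_apply] at this
  linarith

/-- Foster's theorem, summed over ordered pairs of adjacent vertices. -/
theorem IsEffRes.sum_sum_neighborFinset (hG : G.Connected) (hr : IsEffRes G r) :
    ∑ u, ∑ v ∈ G.neighborFinset u, r u v = 2 * (Fintype.card V - 1) := by
  obtain ⟨o⟩ := hG.nonempty
  obtain ⟨g, hg⟩ := hr.exists_grounded o
  have hrow (u : V) : ∑ v ∈ G.neighborFinset u, g u v =
      G.degree u * g u u - (1 - if u = o then 1 else 0) := by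
    have := congrFun (hg u) u
    rw [lapMatrix_mulVec_apply] at this
    simp only [if_true] at this
    linarith
  simp only [hr.eq_of_grounded hG hg, sum_add_distrib, sum_sub_distrib]
  rw [G.sum_sum_neighborFinset_comm fun u v => g v u,
    G.sum_sum_neighborFinset_comm fun u v => g v v]
  simp only [hrow, sum_const, card_neighborFinset_eq_degree, nsmul_eq_mul, sum_sub_distrib,
    sum_ite_eq', mem_univ, if_true, card_univ]
  ring

theorem IsEffRes.dotProduct_eq (hG : G.Connected) (hr : IsEffRes G r) {c φ : V → ℝ}
    (hc : ∑ i, c i = 0) (hφ : G.lapMatrix ℝ *ᵥ φ = c) :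
    c ⬝ᵥ φ = -(c ⬝ᵥ of r *ᵥ c) / 2 := by
  obtain ⟨o⟩ := hG.nonempty
  obtain ⟨g, hg⟩ := hr.exists_grounded o
  set ψ := ∑ i, c i • g i
  have hψ : G.lapMatrix ℝ *ᵥ ψ = c := by
    ext k
    simp only [ψ, mulVec_sum, mulVec_smul, hg, Finset.sum_apply, Pi.smul_apply, smul_eq_mul,
      mul_sub, sum_sub_distrib, mul_ite, mul_one, mul_zero, sum_ite_eq, mem_univ, if_true]
    split_ifs <;> simp [hc]
  obtain ⟨K, hK⟩ : ∃ K, ∀ j, φ j = ψ j + K := ⟨φ o - ψ o, fun j => by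
    linarith [hG.sub_eq_sub_of_lapMatrix_mulVec_eq_s15 (hφ.trans hψ.symm) j o]⟩
  have hcφ : c ⬝ᵥ φ = ∑ i, ∑ j, c i * c j * g i j := by
    simp only [dotProduct, hK, mul_add, sum_add_distrib, ← sum_mul, hc, zero_mul, add_zero, ψ,
      Finset.sum_apply, Pi.smul_apply, smul_eq_mul, mul_sum]
    rw [sum_comm]
    exact sum_congr rfl fun i _ => sum_congr rfl fun j _ => by ring
  have hdiag : ∑ i, ∑ j, c i * c j * g i i = 0 := by
    simp only [mul_assoc, mul_comm (c _) (g _ _), ← mul_sum, hc, mul_zero, sum_const_zero]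
  have hcrc : c ⬝ᵥ of r *ᵥ c = ∑ i, ∑ j, c i * c j * (g i i - g i j - g j i + g j j) := by
    simp only [dotProduct, mulVec, of_apply, mul_sum]
    exact sum_congr rfl fun i _ => sum_congr rfl fun j _ => by
      rw [hr.eq_of_grounded hG hg]; ring
  simp only [mul_add, mul_sub, sum_add_distrib, sum_sub_distrib] at hcrc
  rw [sum_comm (f := fun i j => c i * c j * g j j), sum_comm (f := fun i j => c i * c j * g j i)]
    at hcrc
  simp only [mul_comm (c _) (c _)] at hcrc
  rw [hcrc, hdiag, hcφ]
  ring

theorem IsEffRes.sum_edgeSet_incMatrix (hG : G.Connected) (hr : IsEffRes G r) :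
    ∑ e : G.edgeSet, (G.incMatrix ℝ)ᵀ e ⬝ᵥ of r *ᵥ (G.incMatrix ℝ)ᵀ e =
      2 * (Fintype.card V - 1) := by
  have hNN (u v : V) : ∑ e : G.edgeSet, G.incMatrix ℝ u e * G.incMatrix ℝ v e =
      (if u = v then (G.degree u : ℝ) else 0) + if G.Adj u v then 1 else 0 := by
    rw [← sum_incMatrix_mul_eq_sum_edgeSet, sum_incMatrix_mul_incMatrix]
  calc _ = ∑ u, ∑ v, (∑ e : G.edgeSet, G.incMatrix ℝ u e * G.incMatrix ℝ v e) * r u v := by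
        simp only [dotProduct, mulVec, transpose_apply, of_apply, mul_sum, sum_mul]
        rw [sum_comm]
        refine sum_congr rfl fun u _ => ?_
        rw [sum_comm]
        exact sum_congr rfl fun v _ => sum_congr rfl fun e _ => by ring
    _ = ∑ u, (G.degree u * r u u + ∑ v ∈ G.neighborFinset u, r u v) := by
        simp only [hNN, add_mul, ite_mul, zero_mul, one_mul, sum_add_distrib, sum_ite_eq,
          mem_univ, if_true, neighborFinset_eq_filter, sum_filter]
    _ = _ := by simp [hr.apply_self, hr.sum_sum_neighborFinset hG]

variable {q : ℕ}

theorem lapMatrix_qSubdivision_mulVec_inl (ψ : V ⊕ (G.edgeSet × Fin q) → ℝ) (u : V) :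
    ((qSubdivision G q).lapMatrix ℝ *ᵥ ψ) (Sum.inl u) =
      ∑ w : G.edgeSet × Fin q, G.incMatrix ℝ u w.1 * (ψ (Sum.inl u) - ψ (Sum.inr w)) := by
  rw [lapMatrix_mulVec_apply_eq_sum, Fintype.sum_sum_type]
  simp [qSubdivision, qSubAdj, incMatrix_apply_edgeSet]
  -- the two sides differ only in the `Decidable` instances of their `ite`s
  exact sum_congr rfl fun _ _ => by congr

theorem lapMatrix_qSubdivision_mulVec_inr (ψ : V ⊕ (G.edgeSet × Fin q) → ℝ)
    (w : G.edgeSet × Fin q) :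
    ((qSubdivision G q).lapMatrix ℝ *ᵥ ψ) (Sum.inr w) =
      2 * ψ (Sum.inr w) - ∑ u, G.incMatrix ℝ u w.1 * ψ (Sum.inl u) := by
  have : ((qSubdivision G q).lapMatrix ℝ *ᵥ ψ) (Sum.inr w) =
      ∑ u, G.incMatrix ℝ u w.1 * (ψ (Sum.inr w) - ψ (Sum.inl u)) := by
    rw [lapMatrix_mulVec_apply_eq_sum, Fintype.sum_sum_type]
    simp [qSubdivision, qSubAdj, incMatrix_apply_edgeSet]
    exact sum_congr rfl fun _ _ => by congr
  rw [this, ← sum_incMatrix_apply_of_mem_edgeSet G w.1.2]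
  simp only [mul_sub, sum_sub_distrib, sum_mul]

theorem lapMatrix_mulVec_nsmul_comp_inl (ψ : V ⊕ (G.edgeSet × Fin q) → ℝ) (u : V) :
    (G.lapMatrix ℝ *ᵥ (q • (ψ ∘ Sum.inl))) u =
      2 * ((qSubdivision G q).lapMatrix ℝ *ᵥ ψ) (Sum.inl u) +
        ∑ w : G.edgeSet × Fin q,
          G.incMatrix ℝ u w.1 * ((qSubdivision G q).lapMatrix ℝ *ᵥ ψ) (Sum.inr w) := by
  rw [mulVec_smul, Pi.smul_apply, lapMatrix_mulVec_apply_eq_sum_incMatrix,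
    sum_incMatrix_mul_eq_sum_edgeSet]
  simp only [Function.comp_apply]
  rw [← Fintype.sum_prod_fin_fst q fun e : G.edgeSet =>
      G.incMatrix ℝ u e * (2 * ψ (Sum.inl u) - ∑ v, G.incMatrix ℝ v e * ψ (Sum.inl v)),
    lapMatrix_qSubdivision_mulVec_inl, mul_sum, ← sum_add_distrib]
  exact sum_congr rfl fun w _ => by rw [lapMatrix_qSubdivision_mulVec_inr]; ring

variable {r' : V ⊕ (G.edgeSet × Fin q) → V ⊕ (G.edgeSet × Fin q) → ℝ}

theorem IsEffRes.exists_qSubdivision_inr (hr' : IsEffRes (qSubdivision G q) r')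
    {p p' : G.edgeSet × Fin q} (hpp' : p ≠ p') :
    ∃ φ : V → ℝ, G.lapMatrix ℝ *ᵥ φ = (G.incMatrix ℝ)ᵀ p.1 - (G.incMatrix ℝ)ᵀ p'.1 ∧
      r' (Sum.inr p) (Sum.inr p') =
        1 + ((G.incMatrix ℝ)ᵀ p.1 - (G.incMatrix ℝ)ᵀ p'.1) ⬝ᵥ φ / (2 * q) := by
  obtain ⟨χ, hχ, hr'⟩ := hr' (Sum.inr p) (Sum.inr p')
  refine ⟨q • (χ ∘ Sum.inl), ?_, ?_⟩
  · ext u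
    rw [lapMatrix_mulVec_nsmul_comp_inl, hχ]
    simp [mul_sub, sum_sub_distrib]
  · have hq : (q : ℝ) ≠ 0 := Nat.cast_ne_zero.2 p.2.pos.ne'
    have h1 := congrFun hχ (Sum.inr p)
    have h2 := congrFun hχ (Sum.inr p')
    simp only [lapMatrix_qSubdivision_mulVec_inr, Sum.inr.injEq, if_neg hpp',
      if_neg (Ne.symm hpp'), if_true] at h1 h2
    rw [hr', dotProduct_smul, nsmul_eq_mul]
    simp only [dotProduct, Pi.sub_apply, transpose_apply, sub_mul, sum_sub_distrib,
      Function.comp_apply]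
    field_simp
    linarith

theorem IsEffRes.qSubdivision_apply_inr (hG : G.Connected) (hr : IsEffRes G r)
    (hr' : IsEffRes (qSubdivision G q) r') (p p' : G.edgeSet × Fin q) :
    r' (Sum.inr p) (Sum.inr p') = (if p = p' then 0 else 1) -
      ((G.incMatrix ℝ)ᵀ p.1 - (G.incMatrix ℝ)ᵀ p'.1) ⬝ᵥ
        of r *ᵥ ((G.incMatrix ℝ)ᵀ p.1 - (G.incMatrix ℝ)ᵀ p'.1) / (4 * q) := by
  by_cases h : p = p'
  · subst h
    simp [hr'.apply_self]
  obtain ⟨φ, hφ, hr'p⟩ := hr'.exists_qSubdivision_inr h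
  have hc : ∑ u, ((G.incMatrix ℝ)ᵀ p.1 - (G.incMatrix ℝ)ᵀ p'.1) u = 0 := by
    simp [sum_sub_distrib, sum_incMatrix_apply_of_mem_edgeSet G p.1.2,
      sum_incMatrix_apply_of_mem_edgeSet G p'.1.2]
  rw [hr'p, hr.dotProduct_eq hG hc hφ, if_neg h]
  ring

theorem IsEffRes.sum_sum_incMatrix_sub (hG : G.Connected) (hr : IsEffRes G r) :
    ∑ p : G.edgeSet × Fin q, ∑ p' : G.edgeSet × Fin q,
      ((G.incMatrix ℝ)ᵀ p.1 - (G.incMatrix ℝ)ᵀ p'.1) ⬝ᵥ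
        of r *ᵥ ((G.incMatrix ℝ)ᵀ p.1 - (G.incMatrix ℝ)ᵀ p'.1) =
      4 * q ^ 2 * (Fintype.card G.edgeSet * (Fintype.card V - 1) - mulKirchhoff G r) := by
  have hpairs := (toBilin' (of r)).sum_sum_apply_sub_sub fun p : G.edgeSet × Fin q =>
    (G.incMatrix ℝ)ᵀ p.1
  simp only [toBilin'_apply' (M := of r)] at hpairs
  rw [hpairs, Fintype.sum_prod_fin_fst q fun e : G.edgeSet => (G.incMatrix ℝ)ᵀ e ⬝ᵥ
      of r *ᵥ (G.incMatrix ℝ)ᵀ e, hr.sum_edgeSet_incMatrix hG,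
    Fintype.sum_prod_fin_fst q fun e : G.edgeSet => (G.incMatrix ℝ)ᵀ e,
    sum_edgeSet_incMatrix_transpose, ← Nat.cast_smul_eq_nsmul ℝ, smul_dotProduct, mulVec_smul,
    dotProduct_smul, mulKirchhoff_eq_dotProduct, Fintype.card_prod, Fintype.card_fin]
  simp only [nsmul_eq_mul, smul_eq_mul]
  push_cast
  ring

end

/-- sum of resistances between pairs of new nodes of `S_q(G)`.
(The sum over unordered pairs is half the sum over ordered pairs.) -/
theorem stmt15 [Fintype V] [DecidableEq V] (G : SimpleGraph V) [DecidableRel G.Adj]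
    (hconn : G.Connected) (q : ℕ) (hq : 0 < q)
    (r : V → V → ℝ) (r' : (V ⊕ (G.edgeSet × Fin q)) → (V ⊕ (G.edgeSet × Fin q)) → ℝ)
    (hr : IsEffRes G r) (hr' : IsEffRes (qSubdivision G q) r') :
    (∑ p : G.edgeSet × Fin q, ∑ p' : G.edgeSet × Fin q, r' (Sum.inr p) (Sum.inr p')) / 2 =
      (q : ℝ) / 2 * mulKirchhoff G r +
        (G.edgeFinset.card : ℝ) * q * ((G.edgeFinset.card : ℝ) * q - 1) / 2 -
        (G.edgeFinset.card : ℝ) * ((Fintype.card V : ℝ) - 1) * q / 2 := by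
  have hq0 : (q : ℝ) ≠ 0 := Nat.cast_ne_zero.2 hq.ne'
  simp only [hr.qSubdivision_apply_inr hconn hr', sum_sub_distrib, ← sum_div,
    Fintype.sum_sum_ite_eq_zero_one, hr.sum_sum_incMatrix_sub hconn, Fintype.card_prod,
    Fintype.card_fin, edgeFinset_card]
  push_cast
  field_simp
  ring
end
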